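/- (Lemma 8.3 of the paper.) Let N1, N3, m ≥ 1 and ρ ∈ (0,1). Let z : Fin N1 → EuclideanSpace ℝ (Fin N3) be nonzero, set ‖z‖_F² = ∑_i ‖z(i)‖², μ(z) = N1 · (max_i ‖z(i)‖²) / ‖z‖_F², and α = sqrt(2·μ(z)·log(1/ρ)/m) + (2·μ(z)/(3m))·log(1/ρ). Let S : Fin m → Fin N1 be m indices drawn independently and uniformly at random. Then with probability at least 1 − 2ρ, (1 − α)·(m/N1)·‖z‖_F² ≤ ∑_{l : Fin m} ‖z(S(l))‖² ≤ (1 + α)·(m/N1)·‖z‖_F². -/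

import Mathlib

/-!
For a uniformly random `S : Fin m → Fin N1`, `X(S) = ∑ l, ‖z (S l)‖²` is a sum of `m` i.i.d. copies
of a variable with values in `[0, b]`, `b = maxᵢ ‖z i‖²`, mean `F / N1` and second moment at most
`b F / N1` (`F = ‖z‖_F²`). The Chernoff method, run on counts of index tuples, together with
`eˣ ≤ 1 + x + x² / (2 (1 - x / 3))` for `x < 3`, gives Bernstein's bound
`exp (-t² / (2 (m b F / N1 + b t / 3)))` for each tail `|X - m F / N1| ≥ t`. For `t = α m F / N1`
the exponent is at least `log (1 / ρ)` because `α = s + s² / 3` with `s² = 2 μ(z) log (1 / ρ) / m`.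
-/

open scoped BigOperators Classical

/-- Total energy `‖z‖_F²` of a family of tubes. -/
noncomputable def tubeEnergy {N1 N3 : ℕ} (z : Fin N1 → EuclideanSpace ℝ (Fin N3)) : ℝ :=
  ∑ i : Fin N1, ‖z i‖ ^ 2

/-- Incoherence `μ(z) = N1 · max_i ‖z(i)‖² / ‖z‖_F²`. -/
noncomputable def tubeIncoherence {N1 N3 : ℕ} [NeZero N1]
    (z : Fin N1 → EuclideanSpace ℝ (Fin N3)) : ℝ :=
  (N1 : ℝ) * (Finset.univ.sup' Finset.univ_nonempty fun i : Fin N1 => ‖z i‖ ^ 2) /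
    tubeEnergy z

/-- The quantity `α` of Lemma 8.3. -/
noncomputable def alphaConst {N1 N3 : ℕ} [NeZero N1]
    (z : Fin N1 → EuclideanSpace ℝ (Fin N3)) (m : ℕ) (ρ : ℝ) : ℝ :=
  Real.sqrt (2 * tubeIncoherence z * Real.log (1 / ρ) / m) +
    2 * tubeIncoherence z / (3 * m) * Real.log (1 / ρ)

open Real Finset
open scoped Nat

lemma Real.exp_le_one_add_add_sq_div_two_of_nonpos {x : ℝ} (hx : x ≤ 0) :
    exp x ≤ 1 + x + x ^ 2 / 2 := by
  have hq := quadratic_le_exp_of_nonneg (neg_nonneg.mpr hx)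
  have hinv : exp x * exp (-x) = 1 := by rw [← exp_add, add_neg_cancel, exp_zero]
  -- `(1 + x + x² / 2) (1 - x + x² / 2) = 1 + x⁴ / 4 ≥ eˣ e⁻ˣ`
  nlinarith [exp_pos x, sq_nonneg (x ^ 2), sq_nonneg (x - 1)]

lemma Real.exp_le_one_add_add_sq_div_two_mul_of_nonneg {x : ℝ} (hx : 0 ≤ x) (hx3 : x < 3) :
    exp x ≤ 1 + x + x ^ 2 / 2 * (3 / (3 - x)) := by
  have hexp : HasSum (fun n ↦ x ^ (n + 2) / (n + 2)!) (exp x - ∑ i ∈ range 2, x ^ i / i !) := by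
    refine (hasSum_nat_add_iff' 2 (f := fun n ↦ x ^ n / n !)).mpr ?_
    rw [exp_eq_exp_ℝ]
    exact NormedSpace.expSeries_div_hasSum_exp x
  have hgeom : HasSum (fun n ↦ x ^ 2 / 2 * (x / 3) ^ n) (x ^ 2 / 2 * (1 - x / 3)⁻¹) :=
    (hasSum_geometric_of_lt_one (by positivity) (by linarith)).mul_left _
  have hterm (n : ℕ) : x ^ (n + 2) / (n + 2)! ≤ x ^ 2 / 2 * (x / 3) ^ n := by
    have hfact : (2 * 3 ^ n : ℝ) ≤ (n + 2)! := by
      simpa [add_comm n] using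
        (Nat.cast_le (α := ℝ)).mpr (Nat.factorial_mul_pow_le_factorial (m := 2) (n := n))
    rw [div_le_iff₀ (by positivity), div_pow, pow_add]
    calc x ^ n * x ^ 2 = x ^ 2 / 2 * (x ^ n / 3 ^ n) * (2 * 3 ^ n) := by field_simp
      _ ≤ _ := by gcongr
  have hsum : ∑ i ∈ range 2, x ^ i / i ! = 1 + x := by norm_num [sum_range_succ]
  have hinv : (1 - x / 3)⁻¹ = 3 / (3 - x) := by field_simp
  have htail := hasSum_le hterm hexp hgeom
  rw [hsum, hinv] at htail
  linarith

lemma Real.exp_le_one_add_add_sq_div_two_mul_of_le {x c : ℝ} (hxc : x ≤ c) (hc : 0 ≤ c)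
    (hc3 : c < 3) :
    exp x ≤ 1 + x + x ^ 2 / 2 * (3 / (3 - c)) := by
  have hK : 1 ≤ 3 / (3 - c) := by rw [le_div_iff₀ (by linarith)]; linarith
  rcases le_total x 0 with hx | hx
  · calc exp x ≤ 1 + x + x ^ 2 / 2 * 1 := by
          simpa using exp_le_one_add_add_sq_div_two_of_nonpos hx
      _ ≤ _ := by gcongr
  · calc exp x ≤ 1 + x + x ^ 2 / 2 * (3 / (3 - x)) :=
          exp_le_one_add_add_sq_div_two_mul_of_nonneg hx (hxc.trans_lt hc3)
      _ ≤ _ := by gcongr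

section Sampling

open Fintype

variable {ι : Type*} [Fintype ι]

lemma card_sum_ge_le_exp_mul_sum_exp_pow (g : ι → ℝ) (m : ℕ) (a : ℝ) {r : ℝ} (hr : 0 ≤ r) :
    (#{S : Fin m → ι | a ≤ ∑ l, g (S l)} : ℝ) ≤ exp (-(r * a)) * (∑ i, exp (r * g i)) ^ m := by
  calc (#{S : Fin m → ι | a ≤ ∑ l, g (S l)} : ℝ)
      = ∑ S ∈ {S : Fin m → ι | a ≤ ∑ l, g (S l)}, 1 := by simp
    _ ≤ ∑ S ∈ {S : Fin m → ι | a ≤ ∑ l, g (S l)}, exp (r * ∑ l, g (S l) - r * a) := by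
        refine sum_le_sum fun S hS ↦ one_le_exp ?_
        have := (mem_filter.mp hS).2
        nlinarith
    _ ≤ ∑ S : Fin m → ι, exp (r * ∑ l, g (S l) - r * a) :=
        sum_le_sum_of_subset_of_nonneg (filter_subset _ _) fun _ _ _ ↦ (exp_pos _).le
    _ = exp (-(r * a)) * ∑ S : Fin m → ι, ∏ l, exp (r * g (S l)) := by
        rw [mul_sum]
        refine sum_congr rfl fun S _ ↦ ?_
        rw [← exp_sum, ← exp_add, mul_sum]
        ring_nf
    _ = exp (-(r * a)) * (∑ i, exp (r * g i)) ^ m := by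
        rw [← Fintype.prod_sum fun (_ : Fin m) i ↦ exp (r * g i), prod_const, Finset.card_fin]

lemma card_sum_ge_mean_add_le_exp [Nonempty ι] (g : ι → ℝ) {b V t : ℝ} {m : ℕ} (hm : 0 < m)
    (hb : 0 ≤ b) (hV : 0 < V) (ht : 0 < t) (hgb : ∀ i, g i ≤ b) (hgV : ∑ i, g i ^ 2 ≤ V) :
    (#{S : Fin m → ι | m * (∑ i, g i) / card ι + t ≤ ∑ l, g (S l)} : ℝ) ≤
      card ι ^ m * exp (-(t ^ 2 / (2 * (m * V / card ι + b * t / 3)))) := by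
  set N : ℝ := card ι
  set D : ℝ := m * V / N + b * t / 3
  have hN : 0 < N := by positivity
  have hmV : 0 < m * V / N := by positivity
  have hD : 0 < D := by positivity
  -- Bernstein's choice of the Chernoff parameter: it makes `3 / (3 - r b) = D N / (m V)`.
  set r : ℝ := t / D
  have hr : 0 ≤ r := by positivity
  have hrb : r * b < 3 := by
    rw [div_mul_eq_mul_div, div_lt_iff₀ hD]
    linarith [show D = m * V / N + b * t / 3 from rfl]
  set K : ℝ := 3 / (3 - r * b)
  have hK : K = D * N / (m * V) := by
    simp only [K, r, D]
    field_simp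
    ring
  set y : ℝ := (r * ∑ i, g i + r ^ 2 / 2 * K * V) / N
  have hmgf : ∑ i, exp (r * g i) ≤ N * exp y := by
    calc ∑ i, exp (r * g i) ≤ ∑ i, (1 + r * g i + (r * g i) ^ 2 / 2 * K) :=
          sum_le_sum fun i _ ↦ exp_le_one_add_add_sq_div_two_mul_of_le
            (mul_le_mul_of_nonneg_left (hgb i) hr) (by positivity) hrb
      _ = N + r * ∑ i, g i + r ^ 2 / 2 * K * ∑ i, g i ^ 2 := by
          simp only [sum_add_distrib, mul_sum, sum_const, Finset.card_univ, nsmul_eq_mul, mul_one,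
            N]
          congr 1
          exact sum_congr rfl fun i _ ↦ by ring
      _ ≤ N + r * ∑ i, g i + r ^ 2 / 2 * K * V := by
          gcongr
      _ = N * (y + 1) := by simp only [y]; field_simp; ring
      _ ≤ N * exp y := by gcongr; exact add_one_le_exp y
  calc (#{S : Fin m → ι | m * (∑ i, g i) / N + t ≤ ∑ l, g (S l)} : ℝ)
      ≤ exp (-(r * (m * (∑ i, g i) / N + t))) * (∑ i, exp (r * g i)) ^ m :=
        card_sum_ge_le_exp_mul_sum_exp_pow g m _ hr
    _ ≤ exp (-(r * (m * (∑ i, g i) / N + t))) * (N * exp y) ^ m := by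
        gcongr
    _ = N ^ m * exp (m * y - r * (m * (∑ i, g i) / N + t)) := by
        rw [mul_pow, ← exp_nat_mul, sub_eq_add_neg, exp_add]
        ring
    _ = N ^ m * exp (-(t ^ 2 / (2 * D))) := by
        congr 2
        simp only [y, hK, r]
        field_simp
        ring

lemma card_pow_mul_one_sub_two_exp_le_card_sum_near_mean [Nonempty ι] (f : ι → ℝ) {b α β : ℝ}
    {m : ℕ} (hm : 0 < m) (hf0 : ∀ i, 0 ≤ f i) (hfb : ∀ i, f i ≤ b) (hF : 0 < ∑ i, f i)
    (hα : 0 < α) (hαβ : 2 * β * b * (1 + α / 3) ≤ α ^ 2 * (m / card ι * ∑ i, f i)) :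
    card ι ^ m * (1 - 2 * exp (-β)) ≤
      #{S : Fin m → ι | (1 - α) * (m / card ι) * ∑ i, f i ≤ ∑ l, f (S l) ∧
        ∑ l, f (S l) ≤ (1 + α) * (m / card ι) * ∑ i, f i} := by
  set N : ℝ := card ι
  set F : ℝ := ∑ i, f i
  set t : ℝ := α * (m / N * F)
  have hN : 0 < N := by positivity
  have hb : 0 < b := by
    by_contra! hb
    exact hF.not_ge (sum_nonpos fun i _ ↦ (hfb i).trans hb)
  have ht : 0 < t := by positivity
  have hsq : ∑ i, f i ^ 2 ≤ b * F := by
    rw [mul_sum]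
    exact sum_le_sum fun i _ ↦ by nlinarith [hf0 i, hfb i]
  have htail : exp (-(t ^ 2 / (2 * (m * (b * F) / N + b * t / 3)))) ≤ exp (-β) := by
    rw [exp_le_exp, neg_le_neg_iff, le_div_iff₀ (by positivity)]
    have hκ : 0 ≤ m / N * F := by positivity
    calc β * (2 * (m * (b * F) / N + b * t / 3)) = 2 * β * b * (1 + α / 3) * (m / N * F) := by
          ring
      _ ≤ α ^ 2 * (m / N * F) * (m / N * F) := by gcongr
      _ = t ^ 2 := by ring
  replace htail := mul_le_mul_of_nonneg_left htail (pow_nonneg hN.le m)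
  have hupper : (#{S : Fin m → ι | m * F / N + t ≤ ∑ l, f (S l)} : ℝ) ≤ N ^ m * exp (-β) :=
    (card_sum_ge_mean_add_le_exp f hm hb.le (by positivity) ht hfb hsq).trans htail
  have hlower : (#{S : Fin m → ι | m * (∑ i, -f i) / N + t ≤ ∑ l, -f (S l)} : ℝ) ≤
      N ^ m * exp (-β) :=
    (card_sum_ge_mean_add_le_exp (fun i ↦ -f i) hm hb.le (by positivity) ht
      (fun i ↦ by linarith [hf0 i]) (by simpa only [neg_sq] using hsq)).trans htail
  have hcover : (univ : Finset (Fin m → ι)) ⊆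
      ({S : Fin m → ι | (1 - α) * (m / N) * F ≤ ∑ l, f (S l) ∧
        ∑ l, f (S l) ≤ (1 + α) * (m / N) * F} : Finset _) ∪
      (({S : Fin m → ι | m * (∑ i, -f i) / N + t ≤ ∑ l, -f (S l)} : Finset _) ∪
        ({S : Fin m → ι | m * F / N + t ≤ ∑ l, f (S l)} : Finset _)) := by
    intro S _
    simp only [mem_union, mem_filter, mem_univ, true_and, sum_neg_distrib]
    have hlo : (1 - α) * (m / N) * F = m * F / N - t := by ring
    have hhi : (1 + α) * (m / N) * F = m * F / N + t := by ring
    rw [hlo, hhi]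
    by_contra! h
    obtain ⟨h₁, h₂, h₃⟩ := h
    have : m * -F / N + t = -(m * F / N - t) := by ring
    linarith [h₁ (by linarith)]
  have hunion := (card_le_card hcover).trans <|
    (card_union_le _ _).trans (Nat.add_le_add_left (card_union_le _ _) _)
  rw [Finset.card_univ, Fintype.card_fun, Fintype.card_fin] at hunion
  have hunion' := (Nat.cast_le (α := ℝ)).mpr hunion
  push_cast at hunion'
  linarith

end Sampling

section Tubes

variable {N1 N3 : ℕ} (z : Fin N1 → EuclideanSpace ℝ (Fin N3))

lemma tubeEnergy_pos (hz : z ≠ 0) : 0 < tubeEnergy z := by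
  obtain ⟨i, hi⟩ := Function.ne_iff.mp hz
  exact sum_pos' (fun j _ ↦ sq_nonneg _) ⟨i, mem_univ i, pow_pos (norm_pos_iff.mpr hi) 2⟩

variable [NeZero N1]

lemma norm_sq_le_sup'_norm_sq (i : Fin N1) :
    ‖z i‖ ^ 2 ≤ univ.sup' univ_nonempty fun j ↦ ‖z j‖ ^ 2 :=
  le_sup' (fun j ↦ ‖z j‖ ^ 2) (mem_univ i)

lemma tubeIncoherence_pos (hz : z ≠ 0) : 0 < tubeIncoherence z := by
  obtain ⟨i, hi⟩ := Function.ne_iff.mp hz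
  have hb := (pow_pos (norm_pos_iff.mpr hi) 2).trans_le (norm_sq_le_sup'_norm_sq z i)
  exact div_pos (mul_pos (Nat.cast_pos.mpr (NeZero.pos N1)) hb) (tubeEnergy_pos z hz)

lemma alphaConst_pos {m : ℕ} (hm : 0 < m) {ρ : ℝ} (hβ : 0 < log (1 / ρ)) (hz : z ≠ 0) :
    0 < alphaConst z m ρ := by
  have := tubeIncoherence_pos z hz
  unfold alphaConst
  positivity

lemma two_mul_log_mul_le_alphaConst_sq_mul {m : ℕ} (hm : 0 < m) {ρ : ℝ} (hβ : 0 ≤ log (1 / ρ))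
    (hz : z ≠ 0) :
    2 * log (1 / ρ) * (univ.sup' univ_nonempty fun i ↦ ‖z i‖ ^ 2) * (1 + alphaConst z m ρ / 3) ≤
      alphaConst z m ρ ^ 2 * (m / N1 * tubeEnergy z) := by
  have hE := tubeEnergy_pos z hz
  have hμ := tubeIncoherence_pos z hz
  set s := √(2 * tubeIncoherence z * log (1 / ρ) / m)
  have hs : 0 ≤ s := sqrt_nonneg _
  have hs2 : s ^ 2 = 2 * tubeIncoherence z * log (1 / ρ) / m := sq_sqrt (by positivity)
  have hα : alphaConst z m ρ = s + s ^ 2 / 3 := by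
    rw [alphaConst, hs2]
    ring
  have hb : 2 * log (1 / ρ) * (univ.sup' univ_nonempty fun i ↦ ‖z i‖ ^ 2) =
      s ^ 2 * (m / N1 * tubeEnergy z) := by
    rw [hs2, tubeIncoherence]
    have := NeZero.pos N1
    field_simp
  rw [hb, hα]
  nlinarith [pow_nonneg hs 3, (by positivity : (0 : ℝ) ≤ m / N1 * tubeEnergy z)]

end Tubes

theorem stmt6_general (N1 N3 m : ℕ) [NeZero N1] (hm : 1 ≤ m)
    (ρ : ℝ) (hρ : ρ ∈ Set.Ioo (0 : ℝ) 1)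
    (z : Fin N1 → EuclideanSpace ℝ (Fin N3)) (hz : z ≠ 0) :
    1 - 2 * ρ ≤
      ((Finset.univ.filter fun S : Fin m → Fin N1 =>
          (1 - alphaConst z m ρ) * ((m : ℝ) / N1) * tubeEnergy z ≤
              ∑ l : Fin m, ‖z (S l)‖ ^ 2 ∧
            ∑ l : Fin m, ‖z (S l)‖ ^ 2 ≤
              (1 + alphaConst z m ρ) * ((m : ℝ) / N1) * tubeEnergy z).card : ℝ)
        / (N1 : ℝ) ^ m := by
  obtain ⟨hρ0, hρ1⟩ := hρ
  have hβ : 0 < log (1 / ρ) := log_pos (one_lt_one_div hρ0 hρ1)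
  have hcount := card_pow_mul_one_sub_two_exp_le_card_sum_near_mean (fun i ↦ ‖z i‖ ^ 2)
    (β := log (1 / ρ)) hm (fun i ↦ sq_nonneg _) (norm_sq_le_sup'_norm_sq z) (tubeEnergy_pos z hz)
    (alphaConst_pos z hm hβ hz)
    (by rw [Fintype.card_fin]; exact two_mul_log_mul_le_alphaConst_sq_mul z hm hβ.le hz)
  rw [Fintype.card_fin, exp_neg, exp_log (one_div_pos.mpr hρ0), one_div, inv_inv] at hcount
  rw [le_div_iff₀ (pow_pos (Nat.cast_pos.mpr (NeZero.pos N1)) m), mul_comm]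
  exact hcount

/-- Lemma 8.3: with probability at least `1 - 2ρ` over `m` indices
drawn independently and uniformly at random (with replacement) from `Fin N1`, the
sampled energy of `z` concentrates around `(m/N1)` times its total energy. -/
theorem stmt6 (N1 N3 m : ℕ) [NeZero N1] (hN3 : 1 ≤ N3) (hm : 1 ≤ m)
    (ρ : ℝ) (hρ : ρ ∈ Set.Ioo (0 : ℝ) 1)
    (z : Fin N1 → EuclideanSpace ℝ (Fin N3)) (hz : z ≠ 0) :
    1 - 2 * ρ ≤
      ((Finset.univ.filter fun S : Fin m → Fin N1 =>
          (1 - alphaConst z m ρ) * ((m : ℝ) / N1) * tubeEnergy z ≤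
              ∑ l : Fin m, ‖z (S l)‖ ^ 2 ∧
            ∑ l : Fin m, ‖z (S l)‖ ^ 2 ≤
              (1 + alphaConst z m ρ) * ((m : ℝ) / N1) * tubeEnergy z).card : ℝ)
        / (N1 : ℝ) ^ m :=
  stmt6_general N1 N3 m hm ρ hρ z hz
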